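/- Let C be an [n,k] Hermitian self-orthogonal linear code over F_{q^2} with n = 2k + l and l ≥ 2. Then there exists a chain of Hermitian self-orthogonal linear codes C = C_0 ⊆ C_1 ⊆ ... ⊆ C_m with m = ⌊l/2⌋ and dim C_{i+1} = dim C_i + 1 for all i. -/

import Mathlib

/-!
Write `h(x, y) = ∑ σ(xᵢ) yᵢ` with `σ x = x ^ q`, a Hermitian form over `𝔽_{q²}`. For any subspace
`S`, `dim S^⊥ ≥ n - dim S`; so if `2 dim S + 2 ≤ n` there are `u ∈ S^⊥ \ S` and
`v ∈ (S + K u)^⊥ \ S`. If neither is isotropic, then `h(u, u)` and `h(v, v)` lie in the fixed field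
`𝔽_q`, on which the norm `c ↦ σ(c) c` is surjective, and `u + c v` is isotropic for a suitable `c`.
Adding an isotropic vector of `S^⊥ \ S` to a totally isotropic `S` keeps it totally isotropic and
raises its dimension by one; this can be repeated `⌊l / 2⌋` times.
-/

open Module Submodule

theorem IsCyclic.exists_pow_eq_of_pow_eq_one {G : Type*} [Group G] [IsCyclic G] [Finite G]
    {d e : ℕ} (he : 0 < e) (hG : Nat.card G = d * e) {x : G} (hx : x ^ e = 1) :
    ∃ y : G, y ^ d = x := by
  obtain ⟨g, hg⟩ := IsCyclic.exists_generator (α := G)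
  obtain ⟨t, rfl⟩ := mem_powers_iff_mem_zpowers.mpr (hg x)
  have hdvd : d * e ∣ t * e := by
    rw [← hG, ← orderOf_eq_card_of_forall_mem_zpowers hg]
    exact orderOf_dvd_of_pow_eq_one (by rwa [pow_mul])
  obtain ⟨s, rfl⟩ := (Nat.mul_dvd_mul_iff_right he).mp hdvd
  exact ⟨g ^ s, by rw [← pow_mul, mul_comm]⟩

namespace FiniteField

variable {K : Type*} [Field K] [Fintype K]

theorem exists_ringHom_pow_eq {q : ℕ} (hq : q ∣ Fintype.card K) :
    ∃ σ : K →+* K, ∀ x, σ x = x ^ q := by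
  obtain ⟨p, hchar⟩ := CharP.exists K
  have : Fact p.Prime := ⟨CharP.char_is_prime K p⟩
  obtain ⟨m, -, hm⟩ := FiniteField.card K p
  obtain ⟨i, -, rfl⟩ := (Nat.dvd_prime_pow Fact.out).mp (hm ▸ hq)
  exact ⟨iterateFrobenius K p i, iterateFrobenius_def p i⟩

theorem exists_pow_mul_self_eq {q : ℕ} (hK : Fintype.card K = q ^ 2) {a : K} (ha : a ^ q = a) :
    ∃ c : K, c ^ q * c = a := by
  rcases eq_or_ne a 0 with rfl | ha0
  · exact ⟨0, mul_zero _⟩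
  have hq : 1 < q := by
    have := Fintype.one_lt_card (α := K)
    rw [hK] at this
    by_contra! h
    interval_cases q <;> simp at this
  have hunits : Nat.card Kˣ = (q + 1) * (q - 1) := by
    rw [Nat.card_units, Nat.card_eq_fintype_card, hK]
    obtain ⟨r, rfl⟩ : ∃ r, q = r + 1 := ⟨q - 1, by omega⟩
    simp only [Nat.add_sub_cancel]
    ring_nf; omega
  have hu : (Units.mk0 a ha0) ^ (q - 1) = 1 := by
    ext
    rw [Units.val_pow_eq_pow_val, Units.val_mk0, Units.val_one, pow_sub₀ _ ha0 hq.le, ha, pow_one,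
      mul_inv_cancel₀ ha0]
  obtain ⟨c, hc⟩ := IsCyclic.exists_pow_eq_of_pow_eq_one (by omega) hunits hu
  exact ⟨c, by rw [← pow_succ, ← Units.val_pow_eq_pow_val, hc, Units.val_mk0]⟩

end FiniteField

section Sesquilinear

variable {K M : Type*} [Field K] [AddCommGroup M] [Module K M] {σ : K →+* K}
  {B : M →ₛₗ[σ] M →ₗ[K] K}

theorem sup_span_singleton_le_orthogonalBilin (hB : B.IsSymm) {S : Submodule K M}
    (hS : S ≤ S.orthogonalBilin B) {w : M} (hw : w ∈ S.orthogonalBilin B) (hww : B w w = 0) :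
    S ⊔ K ∙ w ≤ (S ⊔ K ∙ w).orthogonalBilin B := by
  intro y hy x hx
  obtain ⟨s, hs, _, hx', rfl⟩ := mem_sup.mp hx
  obtain ⟨t, ht, _, hy', rfl⟩ := mem_sup.mp hy
  obtain ⟨a, rfl⟩ := mem_span_singleton.mp hx'
  obtain ⟨b, rfl⟩ := mem_span_singleton.mp hy'
  have hws : B w t = 0 := by rw [← hB.eq, hw t ht, map_zero]
  simp [hS ht s hs, hw s hs, hws, hww]

variable [FiniteDimensional K M]

theorem finrank_le_finrank_add_finrank_orthogonalBilin (S : Submodule K M) :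
    finrank K M ≤ finrank K S + finrank K (S.orthogonalBilin B) := by
  let b := Module.finBasis K S
  let L : M →ₗ[K] Fin (finrank K S) → K := LinearMap.pi fun j => B (b j)
  have hker : LinearMap.ker L ≤ S.orthogonalBilin B := by
    intro y hy x hx
    have hzero : (B.flip y).domRestrict S = 0 := b.ext fun j => congrFun hy j
    exact congr($hzero ⟨x, hx⟩)
  calc finrank K M = finrank K (LinearMap.range L) + finrank K (LinearMap.ker L) :=
        L.finrank_range_add_finrank_ker.symm
    _ ≤ finrank K S + finrank K (S.orthogonalBilin B) :=
        add_le_add ((Submodule.finrank_le _).trans (finrank_fin_fun K).le)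
          (Submodule.finrank_mono hker)

theorem exists_mem_orthogonalBilin_notMem {S T : Submodule K M}
    (h : finrank K S + finrank K T < finrank K M) :
    ∃ v ∈ T.orthogonalBilin B, v ∉ S := by
  by_contra! hle
  have := Submodule.finrank_mono (show T.orthogonalBilin B ≤ S from hle)
  have := finrank_le_finrank_add_finrank_orthogonalBilin (B := B) T
  omega

theorem exists_isotropic_mem_orthogonalBilin_notMem (hB : B.IsSymm)
    (hnorm : ∀ a, σ a = a → ∃ c, σ c * c = a) {S : Submodule K M}
    (hS : 2 * finrank K S + 2 ≤ finrank K M) :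
    ∃ w ∈ S.orthogonalBilin B, w ∉ S ∧ B w w = 0 := by
  obtain ⟨u, hu, huS⟩ := exists_mem_orthogonalBilin_notMem (B := B) (S := S) (T := S) (by omega)
  by_cases huu : B u u = 0
  · exact ⟨u, hu, huS, huu⟩
  obtain ⟨v, hv, hvS⟩ := exists_mem_orthogonalBilin_notMem (B := B) (S := S) (T := S ⊔ K ∙ u)
    (by rw [finrank_sup_span_singleton huS]; omega)
  have hvS' : v ∈ S.orthogonalBilin B := orthogonalBilin_le le_sup_left hv
  have huv : B u v = 0 := hv u (mem_sup_right (mem_span_singleton_self u))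
  have hvu : B v u = 0 := by rw [← hB.eq, huv, map_zero]
  by_cases hvv : B v v = 0
  · exact ⟨v, hvS', hvS, hvv⟩
  obtain ⟨c, hc⟩ := hnorm (-(B u u / B v v)) (by rw [map_neg, map_div₀, hB.eq, hB.eq])
  refine ⟨u + c • v, add_mem hu (smul_mem _ c hvS'), fun hw => huu ?_, ?_⟩
  · have : B u (u + c • v) = B u u := by simp [huv]
    rw [← this, ← hB.eq, hu _ hw, map_zero]
  · have hnorm_c : σ c * c * B v v = -B u u := by rw [hc]; field_simp
    simp only [map_add, map_smulₛₗ, LinearMap.add_apply, LinearMap.smul_apply, smul_eq_mul,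
      RingHom.id_apply, huv, hvu]
    linear_combination hnorm_c

theorem exists_isotropic_chain (hB : B.IsSymm) (hnorm : ∀ a, σ a = a → ∃ c, σ c * c = a)
    (m : ℕ) {S : Submodule K M} (hS : S ≤ S.orthogonalBilin B)
    (hdim : 2 * finrank K S + 2 * m ≤ finrank K M) :
    ∃ Cs : ℕ → Submodule K M, Cs 0 = S ∧ (∀ i ≤ m, Cs i ≤ (Cs i).orthogonalBilin B) ∧
      ∀ i < m, Cs i ≤ Cs (i + 1) ∧ finrank K (Cs (i + 1)) = finrank K (Cs i) + 1 := by
  induction m generalizing S with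
  | zero => exact ⟨fun _ => S, rfl, fun _ _ => hS, fun _ h => absurd h (Nat.not_lt_zero _)⟩
  | succ m ih =>
    obtain ⟨w, hw, hwS, hww⟩ := exists_isotropic_mem_orthogonalBilin_notMem hB hnorm
      (S := S) (by omega)
    have hrank := finrank_sup_span_singleton hwS
    obtain ⟨Cs, h0, hiso, hstep⟩ := ih (sup_span_singleton_le_orthogonalBilin hB hS hw hww)
      (by omega)
    refine ⟨fun | 0 => S | i + 1 => Cs i, rfl, ?_, ?_⟩
    · rintro (_ | i) hi
      exacts [hS, hiso i (by omega)]
    · rintro (_ | i) hi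
      · show S ≤ Cs 0 ∧ finrank K (Cs 0) = finrank K S + 1
        exact h0 ▸ ⟨le_sup_left, hrank⟩
      · exact hstep i (by omega)

end Sesquilinear

section SesqDotProduct

variable {K : Type*} [Field K] (σ : K →+* K) (ι : Type*) [Fintype ι]

def sesqDotProduct : (ι → K) →ₛₗ[σ] (ι → K) →ₗ[K] K :=
  LinearMap.mk₂'ₛₗ σ (RingHom.id K) (fun x y => ∑ i, σ (x i) * y i)
    (fun x x' y => by simp only [Pi.add_apply, map_add, add_mul, Finset.sum_add_distrib])
    (fun c x y => by simp only [Pi.smul_apply, smul_eq_mul, map_mul, Finset.mul_sum, mul_assoc])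
    (fun x y y' => by simp only [Pi.add_apply, mul_add, Finset.sum_add_distrib])
    (fun c x y => by
      simp only [Pi.smul_apply, smul_eq_mul, RingHom.id_apply, Finset.mul_sum, mul_left_comm])

variable {σ ι}

@[simp]
theorem sesqDotProduct_apply (x y : ι → K) : sesqDotProduct σ ι x y = ∑ i, σ (x i) * y i :=
  rfl

theorem isSymm_sesqDotProduct (hσ : ∀ x, σ (σ x) = x) : (sesqDotProduct σ ι).IsSymm :=
  LinearMap.isSymm_def.mpr fun x y => by simp [hσ, mul_comm]

end SesqDotProduct

theorem stmt4_general (q : ℕ)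
    (K : Type) [Field K] [Fintype K] (hK : Fintype.card K = q ^ 2)
    (n k l : ℕ) (hn : n = 2 * k + l)
    (C : Submodule K (Fin n → K)) (hdim : Module.finrank K C = k)
    (hso : ∀ x ∈ C, ∀ y ∈ C, ∑ i, (x i) ^ q * y i = 0) :
    ∃ Cs : ℕ → Submodule K (Fin n → K),
      Cs 0 = C ∧
      (∀ i ≤ l / 2, ∀ x ∈ Cs i, ∀ y ∈ Cs i, ∑ j, (x j) ^ q * y j = 0) ∧
      (∀ i < l / 2, Cs i ≤ Cs (i + 1) ∧
        Module.finrank K (Cs (i + 1)) = Module.finrank K (Cs i) + 1) := by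
  obtain ⟨σ, hσ⟩ := FiniteField.exists_ringHom_pow_eq (K := K) (hK ▸ dvd_pow_self q two_ne_zero)
  have hB : ∀ x y, sesqDotProduct σ (Fin n) x y = ∑ i, x i ^ q * y i := by simp [hσ]
  have hσσ : ∀ x, σ (σ x) = x := fun x => by
    rw [hσ, hσ, ← pow_mul, ← sq, ← hK, FiniteField.pow_card]
  have hnorm : ∀ a, σ a = a → ∃ c, σ c * c = a := fun a ha => by
    simpa only [hσ] using FiniteField.exists_pow_mul_self_eq hK (a := a) (by rwa [← hσ])
  obtain ⟨Cs, h0, hiso, hchain⟩ := exists_isotropic_chain (isSymm_sesqDotProduct hσσ) hnorm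
    (l / 2) (S := C) (fun y hy x hx => hB x y ▸ hso x hx y hy)
    (by rw [hdim, finrank_fin_fun]; omega)
  exact ⟨Cs, h0, fun i hi x hx y hy => hB x y ▸ hiso i hi hy x hx, hchain⟩

/-- an [n,k] Hermitian self-orthogonal code with n = 2k + l, l ≥ 2,
lies at the bottom of a chain of Hermitian self-orthogonal codes of length ⌊l/2⌋
with dimensions increasing by one at each step. -/
theorem stmt4 (q : ℕ) (hq : ∃ p e : ℕ, p.Prime ∧ 0 < e ∧ q = p ^ e)
    (K : Type) [Field K] [Fintype K] (hK : Fintype.card K = q ^ 2)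
    (n k l : ℕ) (hl : 2 ≤ l) (hn : n = 2 * k + l)
    (C : Submodule K (Fin n → K)) (hdim : Module.finrank K C = k)
    (hso : ∀ x ∈ C, ∀ y ∈ C, ∑ i, (x i) ^ q * y i = 0) :
    ∃ Cs : ℕ → Submodule K (Fin n → K),
      Cs 0 = C ∧
      (∀ i ≤ l / 2, ∀ x ∈ Cs i, ∀ y ∈ Cs i, ∑ j, (x j) ^ q * y j = 0) ∧
      (∀ i < l / 2, Cs i ≤ Cs (i + 1) ∧
        Module.finrank K (Cs (i + 1)) = Module.finrank K (Cs i) + 1) :=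
  stmt4_general q K hK n k l hn C hdim hso
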